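/- arXiv:2002.11875 — 7 statements merged into one kernel-verified Lean document; each statement's English description precedes it below -/
import Mathlib

section
/- Let X ⊆ ℝ^n and Y ⊆ ℝ^m be nonempty, f : ℝ^n × ℝ^m → ℝ, x* ∈ X, y* ∈ Y, and ε₀ > 0. Suppose f(x*,y) ≤ f(x*,y*) for all y ∈ N(y*,ε₀) := {y ∈ Y : ‖y − y*‖ ≤ ε₀}. If for some 0 ≤ ε ≤ ε₀ there is δ > 0 such that f̄_{ε,y*}(x*) ≤ f̄_{ε,y*}(x) for all x ∈ X with ‖x − x*‖ ≤ δ, then for every set N with N(y*,ε) ⊆ N ⊆ N(y*,ε₀), the function f̄_N(x) := sup{ f(x,y) : y ∈ N } (supremum in the extended reals) satisfies f̄_N(x*) ≤ f̄_N(x) for all x ∈ X with ‖x − x*‖ ≤ δ; in particular x* is a local minimizer of f̄_N on X over the same neighborhood. -/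
/-! Since `y*` maximizes `f(x*, ·)` on `N(y*, ε₀) ⊇ N ⊇ N(y*, ε) ∋ y*`, both envelopes
`f̄_N` and `f̄_{ε,y*}` equal `f(x*, y*)` at `x*`; elsewhere `f̄_N ≥ f̄_{ε,y*}` because a
supremum grows with its index set. -/

open Filter

/-- Upper envelope of `f(·, y)` over a set `N` of `y`-values, in the extended reals. -/
noncomputable def envSet {n m : ℕ}
    (f : EuclideanSpace ℝ (Fin n) → EuclideanSpace ℝ (Fin m) → ℝ)
    (N : Set (EuclideanSpace ℝ (Fin m))) (x : EuclideanSpace ℝ (Fin n)) : EReal :=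
  ⨆ y ∈ N, ((f x y : ℝ) : EReal)

/-- Local upper envelope `f̄_{ε,y*}` relative to `Y`, in the extended reals. -/
noncomputable def envU {n m : ℕ}
    (f : EuclideanSpace ℝ (Fin n) → EuclideanSpace ℝ (Fin m) → ℝ)
    (Y : Set (EuclideanSpace ℝ (Fin m))) (ystar : EuclideanSpace ℝ (Fin m)) (ε : ℝ)
    (x : EuclideanSpace ℝ (Fin n)) : EReal :=
  envSet f {y ∈ Y | ‖y - ystar‖ ≤ ε} x

section Envelope

variable {n m : ℕ} (f : EuclideanSpace ℝ (Fin n) → EuclideanSpace ℝ (Fin m) → ℝ)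

theorem envSet_mono {N N' : Set (EuclideanSpace ℝ (Fin m))} (h : N ⊆ N')
    (x : EuclideanSpace ℝ (Fin n)) : envSet f N x ≤ envSet f N' x :=
  biSup_mono h

theorem envSet_eq_of_mem_of_forall_le {N : Set (EuclideanSpace ℝ (Fin m))}
    {x : EuclideanSpace ℝ (Fin n)} {y₀ : EuclideanSpace ℝ (Fin m)} (h₀ : y₀ ∈ N)
    (hle : ∀ y ∈ N, f x y ≤ f x y₀) : envSet f N x = f x y₀ :=
  le_antisymm (iSup₂_le fun y hy => EReal.coe_le_coe_iff.mpr (hle y hy))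
    (le_iSup₂_of_le (f := fun y _ => ((f x y : ℝ) : EReal)) y₀ h₀ le_rfl)

end Envelope

theorem envelope_minimizer_of_intermediate_set_general {n m : ℕ}
    (X : Set (EuclideanSpace ℝ (Fin n))) (Y : Set (EuclideanSpace ℝ (Fin m)))
    (f : EuclideanSpace ℝ (Fin n) → EuclideanSpace ℝ (Fin m) → ℝ)
    (xstar : EuclideanSpace ℝ (Fin n)) (ystar : EuclideanSpace ℝ (Fin m))
    (hyY : ystar ∈ Y)
    (ε₀ : ℝ)
    (hmax : ∀ y ∈ Y, ‖y - ystar‖ ≤ ε₀ → f xstar y ≤ f xstar ystar)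
    (ε : ℝ) (hε0 : 0 ≤ ε)
    (δ : ℝ)
    (hmin : ∀ x ∈ X, ‖x - xstar‖ ≤ δ → envU f Y ystar ε xstar ≤ envU f Y ystar ε x) :
    ∀ N : Set (EuclideanSpace ℝ (Fin m)),
      {y ∈ Y | ‖y - ystar‖ ≤ ε} ⊆ N → N ⊆ {y ∈ Y | ‖y - ystar‖ ≤ ε₀} →
      ∀ x ∈ X, ‖x - xstar‖ ≤ δ → envSet f N xstar ≤ envSet f N x := by
  intro N hNε hNε₀ x hxX hxδ
  have hcenter : ystar ∈ {y ∈ Y | ‖y - ystar‖ ≤ ε} := ⟨hyY, by simpa using hε0⟩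
  have hmaxN : ∀ y ∈ N, f xstar y ≤ f xstar ystar := fun y hy =>
    hmax y (hNε₀ hy).1 (hNε₀ hy).2
  calc envSet f N xstar = f xstar ystar :=
        envSet_eq_of_mem_of_forall_le f (hNε hcenter) hmaxN
    _ = envU f Y ystar ε xstar :=
        (envSet_eq_of_mem_of_forall_le f hcenter fun y hy => hmaxN y (hNε hy)).symm
    _ ≤ envU f Y ystar ε x := hmin x hxX hxδ
    _ ≤ envSet f N x := envSet_mono f hNε x

/-- If `y*` maximizes `f(x*, ·)` over `N(y*, ε₀)` and `x*` locally minimizes the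
envelope `f̄_{ε,y*}` (for some `0 ≤ ε ≤ ε₀`) over `{x ∈ X : ‖x − x*‖ ≤ δ}`, then `x*`
remains a minimizer over the same neighborhood of the envelope `f̄_N` for any set `N`
with `N(y*,ε) ⊆ N ⊆ N(y*,ε₀)`. -/
theorem envelope_minimizer_of_intermediate_set {n m : ℕ}
    (X : Set (EuclideanSpace ℝ (Fin n))) (Y : Set (EuclideanSpace ℝ (Fin m)))
    (hX : X.Nonempty) (hY : Y.Nonempty)
    (f : EuclideanSpace ℝ (Fin n) → EuclideanSpace ℝ (Fin m) → ℝ)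
    (xstar : EuclideanSpace ℝ (Fin n)) (ystar : EuclideanSpace ℝ (Fin m))
    (hxX : xstar ∈ X) (hyY : ystar ∈ Y)
    (ε₀ : ℝ) (hε₀ : 0 < ε₀)
    (hmax : ∀ y ∈ Y, ‖y - ystar‖ ≤ ε₀ → f xstar y ≤ f xstar ystar)
    (ε : ℝ) (hε0 : 0 ≤ ε) (hεε₀ : ε ≤ ε₀)
    (δ : ℝ) (hδ : 0 < δ)
    (hmin : ∀ x ∈ X, ‖x - xstar‖ ≤ δ → envU f Y ystar ε xstar ≤ envU f Y ystar ε x) :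
    ∀ N : Set (EuclideanSpace ℝ (Fin m)),
      {y ∈ Y | ‖y - ystar‖ ≤ ε} ⊆ N → N ⊆ {y ∈ Y | ‖y - ystar‖ ≤ ε₀} →
      ∀ x ∈ X, ‖x - xstar‖ ≤ δ → envSet f N xstar ≤ envSet f N x :=
  envelope_minimizer_of_intermediate_set_general X Y f xstar ystar hyY ε₀ hmax ε hε0 δ hmin
end

section
/- Let q(x,y) = ½ xᵀA x + ½ yᵀB y + xᵀC y + aᵀx + bᵀy + c₀ be a quadratic game on ℝ^n × ℝ^m with A, B symmetric. Then the following are equivalent: (i) q has a global saddle point; (ii) q has a global minimax point and q has a global maximin point; (iii) A is positive semidefinite, B is negative semidefinite, and there exist x₀ ∈ ℝ^n, y₀ ∈ ℝ^m with A x₀ + C y₀ = a and Cᵀ x₀ + B y₀ = b. -/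
open Matrix

/-- `(xs, ys)` is a global saddle point of `f` (unconstrained case). -/
def IsGlobalSaddle {n m : ℕ}
    (f : EuclideanSpace ℝ (Fin n) → EuclideanSpace ℝ (Fin m) → ℝ)
    (xs : EuclideanSpace ℝ (Fin n)) (ys : EuclideanSpace ℝ (Fin m)) : Prop :=
  (∀ y, f xs y ≤ f xs ys) ∧ (∀ x, f xs ys ≤ f x ys)

/-- `(xs, ys)` is a global minimax point of `f` (unconstrained case). -/
def IsGlobalMinimax {n m : ℕ}
    (f : EuclideanSpace ℝ (Fin n) → EuclideanSpace ℝ (Fin m) → ℝ)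
    (xs : EuclideanSpace ℝ (Fin n)) (ys : EuclideanSpace ℝ (Fin m)) : Prop :=
  (∀ y, f xs y ≤ f xs ys) ∧
  (∀ x, ∀ c : ℝ, (∀ y, f x y ≤ c) → f xs ys ≤ c)

/-- `(xs, ys)` is a global maximin point of `f` (unconstrained case). -/
def IsGlobalMaximin {n m : ℕ}
    (f : EuclideanSpace ℝ (Fin n) → EuclideanSpace ℝ (Fin m) → ℝ)
    (xs : EuclideanSpace ℝ (Fin n)) (ys : EuclideanSpace ℝ (Fin m)) : Prop :=
  (∀ x, f xs ys ≤ f x ys) ∧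
  (∀ y, ∀ c : ℝ, (∀ x, c ≤ f x y) → c ≤ f xs ys)

/-- A real matrix is negative semidefinite iff its negation is positive semidefinite. -/
def Matrix.NegSemidef' {m : ℕ} (M : Matrix (Fin m) (Fin m) ℝ) : Prop := (-M).PosSemidef

/-- The quadratic game `q(x,y) = ½ xᵀAx + ½ yᵀBy + xᵀCy + aᵀx + bᵀy + c₀`. -/
noncomputable def quadGame {n m : ℕ} (A : Matrix (Fin n) (Fin n) ℝ)
    (B : Matrix (Fin m) (Fin m) ℝ) (C : Matrix (Fin n) (Fin m) ℝ)
    (a : Fin n → ℝ) (b : Fin m → ℝ) (c₀ : ℝ)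
    (x : EuclideanSpace ℝ (Fin n)) (y : EuclideanSpace ℝ (Fin m)) : ℝ :=
  (1 / 2) * (x ⬝ᵥ (A *ᵥ x)) + (1 / 2) * (y ⬝ᵥ (B *ᵥ y)) + x ⬝ᵥ (C *ᵥ y) +
    a ⬝ᵥ x + b ⬝ᵥ y + c₀

/-!
For fixed `y`, `q(·, y)` is a quadratic function with Hessian `A`, and `x` minimizes it iff
`A ⪰ 0` and the gradient `A x + C y + a` vanishes; likewise in `y` with `-B`. So the saddle
points are exactly the solutions `(-x₀, -y₀)` of the stationarity system, once `A ⪰ 0 ⪰ B`.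
A minimax point and a maximin point give the sign conditions and one half of the system each.
The halves combine because the system matrix `M = [[A, C], [Cᵀ, B]]` is symmetric, so its range
is the orthogonal complement of its kernel; and `A ⪰ 0 ⪰ B` forces every `(u, v) ∈ ker M` to
satisfy `A u = 0`, `B v = 0`, `C v = 0`, `Cᵀ u = 0`, which makes `(a, b)` orthogonal to it.
-/

namespace Matrix

lemma mulVec_dotProduct {ι κ : Type*} [Fintype ι] [Fintype κ] (M : Matrix ι κ ℝ) (x : κ → ℝ)
    (u : ι → ℝ) : (M *ᵥ x) ⬝ᵥ u = x ⬝ᵥ (Mᵀ *ᵥ u) := by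
  rw [dotProduct_comm, dotProduct_mulVec, mulVec_transpose, dotProduct_comm]

lemma mulVec_add_mulVec_add_eq_zero_iff {ι κ ν : Type*} [Fintype κ] [Fintype ν]
    (M : Matrix ι κ ℝ) (N : Matrix ι ν ℝ) (x : κ → ℝ) (y : ν → ℝ) (c : ι → ℝ) :
    M *ᵥ x + N *ᵥ y + c = 0 ↔ M *ᵥ (-x) + N *ᵥ (-y) = c := by
  rw [mulVec_neg, mulVec_neg, ← neg_add, neg_eq_iff_add_eq_zero]

theorem IsSymm.exists_mulVec_eq {ι : Type*} [Fintype ι] [DecidableEq ι] {M : Matrix ι ι ℝ}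
    (hM : M.IsSymm) {d : ι → ℝ} (hd : ∀ u, M *ᵥ u = 0 → d ⬝ᵥ u = 0) : ∃ z, M *ᵥ z = d := by
  have hT : M.toEuclideanLin.IsSymmetric :=
    isSymmetric_toEuclideanLin_iff.2 (isHermitian_iff_isSymm.2 hM)
  have hd' : WithLp.toLp 2 d ∈ LinearMap.range M.toEuclideanLin := by
    rw [← Submodule.orthogonal_orthogonal (LinearMap.range _), hT.orthogonal_range]
    intro u hu
    rw [EuclideanSpace.inner_eq_star_dotProduct, star_trivial]
    exact hd u (by simpa using congrArg WithLp.ofLp hu)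
  obtain ⟨z, hz⟩ := hd'
  exact ⟨z.ofLp, by simpa using congrArg WithLp.ofLp hz⟩

end Matrix

section QuadFun

variable {ι : Type*} [Fintype ι] {M : Matrix ι ι ℝ}

noncomputable def quadFun (M : Matrix ι ι ℝ) (d x : ι → ℝ) : ℝ :=
  1 / 2 * (x ⬝ᵥ (M *ᵥ x)) + d ⬝ᵥ x

lemma quadFun_add_sub (hM : M.IsSymm) (d z u : ι → ℝ) :
    quadFun M d (z + u) - quadFun M d z = quadFun M (M *ᵥ z + d) u := by
  have h₁ : (M *ᵥ z) ⬝ᵥ u = z ⬝ᵥ (M *ᵥ u) := by rw [mulVec_dotProduct, hM.eq]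
  have h₂ : u ⬝ᵥ (M *ᵥ z) = z ⬝ᵥ (M *ᵥ u) := by rw [dotProduct_comm, h₁]
  simp only [quadFun, mulVec_add, dotProduct_add, add_dotProduct, h₁, h₂]
  ring

theorem forall_quadFun_le_iff (hM : M.IsSymm) {d z : ι → ℝ} :
    (∀ x, quadFun M d z ≤ quadFun M d x) ↔ M.PosSemidef ∧ M *ᵥ z + d = 0 := by
  constructor
  · intro h
    set g := M *ᵥ z + d
    -- the `+ 0` is the constant term in the shape `discrim_le_zero` expects
    have hline : ∀ u (t : ℝ), 0 ≤ 1 / 2 * (u ⬝ᵥ (M *ᵥ u)) * (t * t) + g ⬝ᵥ u * t + 0 := by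
      intro u t
      have := sub_nonneg.2 (h (z + t • u))
      rw [quadFun_add_sub hM] at this
      simp only [quadFun, mulVec_smul, dotProduct_smul, smul_dotProduct, smul_eq_mul] at this
      linarith
    have hg : ∀ u, g ⬝ᵥ u = 0 := fun u => by
      have := discrim_le_zero (hline u)
      rw [discrim] at this
      nlinarith
    refine ⟨.of_dotProduct_mulVec_nonneg (isHermitian_iff_isSymm.2 hM) fun u => ?_,
      dotProduct_self_eq_zero.1 (hg g)⟩
    have := hline u 1
    simp only [hg, star_trivial] at this ⊢
    linarith
  · rintro ⟨hP, hg⟩ x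
    have hx := quadFun_add_sub hM d z (x - z)
    rw [add_sub_cancel, hg] at hx
    have := hP.dotProduct_mulVec_nonneg (x - z)
    simp only [quadFun, star_trivial, zero_dotProduct] at hx this ⊢
    linarith

end QuadFun

section BlockSystem

variable {ι κ : Type*} [Fintype ι] [Fintype κ] {A : Matrix ι ι ℝ} {B : Matrix κ κ ℝ}
  {C : Matrix ι κ ℝ}

lemma mulVec_eq_zero_of_block_kernel (hA : A.PosSemidef) (hB : (-B).PosSemidef)
    {u : ι → ℝ} {v : κ → ℝ} (h₁ : A *ᵥ u + C *ᵥ v = 0) (h₂ : Cᵀ *ᵥ u + B *ᵥ v = 0) :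
    A *ᵥ u = 0 ∧ B *ᵥ v = 0 := by
  have hAu := hA.dotProduct_mulVec_nonneg u
  have hBv := hB.dotProduct_mulVec_nonneg v
  have e₁ : u ⬝ᵥ (A *ᵥ u) + u ⬝ᵥ (C *ᵥ v) = 0 := by rw [← dotProduct_add, h₁, dotProduct_zero]
  have e₂ : v ⬝ᵥ (Cᵀ *ᵥ u) + v ⬝ᵥ (B *ᵥ v) = 0 := by rw [← dotProduct_add, h₂, dotProduct_zero]
  have e₃ : v ⬝ᵥ (Cᵀ *ᵥ u) = u ⬝ᵥ (C *ᵥ v) := by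
    rw [dotProduct_comm, mulVec_dotProduct, transpose_transpose]
  simp only [star_trivial, neg_mulVec, dotProduct_neg] at hAu hBv
  refine ⟨(hA.dotProduct_mulVec_zero_iff u).1 (by rw [star_trivial]; linarith), ?_⟩
  have hBv' := (hB.dotProduct_mulVec_zero_iff v).1
    (by simp only [star_trivial, neg_mulVec, dotProduct_neg]; linarith)
  rwa [neg_mulVec, neg_eq_zero] at hBv'

theorem exists_block_solution_of_posSemidef (hA : A.PosSemidef) (hB : (-B).PosSemidef)
    {a : ι → ℝ} {b : κ → ℝ} (ha : ∃ x y, A *ᵥ x + C *ᵥ y = a)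
    (hb : ∃ x y, Cᵀ *ᵥ x + B *ᵥ y = b) :
    ∃ x y, A *ᵥ x + C *ᵥ y = a ∧ Cᵀ *ᵥ x + B *ᵥ y = b := by
  classical
  obtain ⟨x₁, y₁, rfl⟩ := ha
  obtain ⟨x₂, y₂, rfl⟩ := hb
  have hAs : A.IsSymm := isHermitian_iff_isSymm.1 hA.isHermitian
  have hBs : B.IsSymm := by simpa using isHermitian_iff_isSymm.1 hB.isHermitian
  have hM : (fromBlocks A C Cᵀ B).IsSymm := hAs.fromBlocks rfl hBs
  obtain ⟨z, hz⟩ := hM.exists_mulVec_eq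
      (d := Sum.elim (A *ᵥ x₁ + C *ᵥ y₁) (Cᵀ *ᵥ x₂ + B *ᵥ y₂)) <| by
    intro w hw
    rw [fromBlocks_mulVec, ← Sum.elim_zero_zero, Sum.elim_eq_iff] at hw
    obtain ⟨hAw, hBw⟩ := mulVec_eq_zero_of_block_kernel hA hB hw.1 hw.2
    rw [hAw, zero_add, hBw, add_zero] at hw
    rw [← Sum.elim_comp_inl_inr w, sumElim_dotProduct_sumElim]
    simp only [add_dotProduct, mulVec_dotProduct, hAs.eq, hBs.eq, transpose_transpose, hAw, hBw,
      hw.1, hw.2, dotProduct_zero, add_zero]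
  rw [fromBlocks_mulVec, Sum.elim_eq_iff] at hz
  exact ⟨_, _, hz⟩

end BlockSystem

theorem IsGlobalSaddle.isGlobalMinimax {n m : ℕ}
    {f : EuclideanSpace ℝ (Fin n) → EuclideanSpace ℝ (Fin m) → ℝ}
    {xs : EuclideanSpace ℝ (Fin n)} {ys : EuclideanSpace ℝ (Fin m)}
    (h : IsGlobalSaddle f xs ys) : IsGlobalMinimax f xs ys :=
  ⟨h.1, fun x _ hc => (h.2 x).trans (hc ys)⟩

theorem IsGlobalSaddle.isGlobalMaximin {n m : ℕ}
    {f : EuclideanSpace ℝ (Fin n) → EuclideanSpace ℝ (Fin m) → ℝ}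
    {xs : EuclideanSpace ℝ (Fin n)} {ys : EuclideanSpace ℝ (Fin m)}
    (h : IsGlobalSaddle f xs ys) : IsGlobalMaximin f xs ys :=
  ⟨h.2, fun y _ hc => (hc xs).trans (h.1 y)⟩

section QuadGame

variable {n m : ℕ} {A : Matrix (Fin n) (Fin n) ℝ} {B : Matrix (Fin m) (Fin m) ℝ}
  {C : Matrix (Fin n) (Fin m) ℝ} {a : Fin n → ℝ} {b : Fin m → ℝ} {c₀ : ℝ}

lemma quadGame_eq_quadFun_left (x : EuclideanSpace ℝ (Fin n)) (y : EuclideanSpace ℝ (Fin m)) :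
    quadGame A B C a b c₀ x y = quadFun A (C *ᵥ y + a) x + quadFun B b y + c₀ := by
  simp only [quadGame, quadFun, add_dotProduct, dotProduct_comm (C *ᵥ _)]
  ring

lemma quadGame_eq_quadFun_right (x : EuclideanSpace ℝ (Fin n)) (y : EuclideanSpace ℝ (Fin m)) :
    quadGame A B C a b c₀ x y = -quadFun (-B) (-(Cᵀ *ᵥ x + b)) y + quadFun A a x + c₀ := by
  simp only [quadGame, quadFun, neg_mulVec, dotProduct_neg, neg_dotProduct, add_dotProduct,
    mulVec_dotProduct Cᵀ, transpose_transpose]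
  ring

theorem quadGame_min_left_iff (hA : A.IsSymm) {xs : EuclideanSpace ℝ (Fin n)}
    {ys : EuclideanSpace ℝ (Fin m)} :
    (∀ x, quadGame A B C a b c₀ xs ys ≤ quadGame A B C a b c₀ x ys) ↔
      A.PosSemidef ∧ A *ᵥ xs + C *ᵥ ys + a = 0 := by
  simp only [quadGame_eq_quadFun_left, add_le_add_iff_right, add_assoc]
  exact (WithLp.equiv 2 (Fin n → ℝ)).forall_congr_right.trans (forall_quadFun_le_iff hA)

theorem quadGame_max_right_iff (hB : B.IsSymm) {xs : EuclideanSpace ℝ (Fin n)}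
    {ys : EuclideanSpace ℝ (Fin m)} :
    (∀ y, quadGame A B C a b c₀ xs y ≤ quadGame A B C a b c₀ xs ys) ↔
      (-B).PosSemidef ∧ Cᵀ *ᵥ xs + B *ᵥ ys + b = 0 := by
  simp only [quadGame_eq_quadFun_right, add_le_add_iff_right, neg_le_neg_iff]
  refine (WithLp.equiv 2 (Fin m → ℝ)).forall_congr_right.trans
    ((forall_quadFun_le_iff hB.neg).trans (and_congr_right' ?_))
  rw [neg_mulVec, ← neg_add, neg_eq_zero, add_left_comm, add_assoc]

theorem isGlobalSaddle_quadGame_iff (hA : A.IsSymm) (hB : B.IsSymm)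
    {xs : EuclideanSpace ℝ (Fin n)} {ys : EuclideanSpace ℝ (Fin m)} :
    IsGlobalSaddle (quadGame A B C a b c₀) xs ys ↔ A.PosSemidef ∧ B.NegSemidef' ∧
      A *ᵥ xs + C *ᵥ ys + a = 0 ∧ Cᵀ *ᵥ xs + B *ᵥ ys + b = 0 := by
  rw [IsGlobalSaddle, quadGame_max_right_iff hB, quadGame_min_left_iff hA, NegSemidef']
  tauto

theorem exists_isGlobalSaddle_quadGame_iff (hA : A.IsSymm) (hB : B.IsSymm) :
    (∃ xs ys, IsGlobalSaddle (quadGame A B C a b c₀) xs ys) ↔ A.PosSemidef ∧ B.NegSemidef' ∧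
      ∃ x₀ y₀, A *ᵥ x₀ + C *ᵥ y₀ = a ∧ Cᵀ *ᵥ x₀ + B *ᵥ y₀ = b := by
  simp only [isGlobalSaddle_quadGame_iff hA hB, mulVec_add_mulVec_add_eq_zero_iff]
  constructor
  · rintro ⟨xs, ys, hA', hB', h₁, h₂⟩
    exact ⟨hA', hB', _, _, h₁, h₂⟩
  · rintro ⟨hA', hB', x₀, y₀, h₁, h₂⟩
    exact ⟨WithLp.toLp 2 (-x₀), WithLp.toLp 2 (-y₀), hA', hB', by simpa using h₁,
      by simpa using h₂⟩

end QuadGame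

/-- For quadratic games: existence of a global saddle point, the joint existence of
global minimax and global maximin points, and the algebraic condition
`A ⪰ 0 ⪰ B` with solvability of the stationarity equations are all equivalent. -/
theorem quadGame_saddle_existence_tfae {n m : ℕ}
    (A : Matrix (Fin n) (Fin n) ℝ) (B : Matrix (Fin m) (Fin m) ℝ)
    (C : Matrix (Fin n) (Fin m) ℝ) (a : Fin n → ℝ) (b : Fin m → ℝ) (c₀ : ℝ)
    (hA : A.IsSymm) (hB : B.IsSymm) :
    ((∃ xs ys, IsGlobalSaddle (quadGame A B C a b c₀) xs ys) ↔
      ((∃ xs ys, IsGlobalMinimax (quadGame A B C a b c₀) xs ys) ∧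
       (∃ xs ys, IsGlobalMaximin (quadGame A B C a b c₀) xs ys))) ∧
    ((∃ xs ys, IsGlobalSaddle (quadGame A B C a b c₀) xs ys) ↔
      (A.PosSemidef ∧ Matrix.NegSemidef' B ∧
        ∃ (x₀ : Fin n → ℝ) (y₀ : Fin m → ℝ),
          A *ᵥ x₀ + C *ᵥ y₀ = a ∧ Cᵀ *ᵥ x₀ + B *ᵥ y₀ = b)) := by
  refine ⟨⟨fun ⟨xs, ys, h⟩ => ⟨⟨xs, ys, h.isGlobalMinimax⟩, ⟨xs, ys, h.isGlobalMaximin⟩⟩, ?_⟩,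
    exists_isGlobalSaddle_quadGame_iff hA hB⟩
  rintro ⟨⟨xs, ys, hmax, -⟩, ⟨xs', ys', hmin, -⟩⟩
  obtain ⟨hB', hb⟩ := (quadGame_max_right_iff hB).1 hmax
  obtain ⟨hA', ha⟩ := (quadGame_min_left_iff hA).1 hmin
  rw [mulVec_add_mulVec_add_eq_zero_iff] at ha hb
  exact (exists_isGlobalSaddle_quadGame_iff hA hB).2
    ⟨hA', hB', exists_block_solution_of_posSemidef hA' hB' ⟨_, _, ha⟩ ⟨_, _, hb⟩⟩
end

section
/- Let a, b, c ∈ ℝ and f(x,y) = a x²/2 + c x y + b y²/2 on ℝ × ℝ. Then (0,0) is a local robust point of f if and only if either (c = 0, a ≥ 0 and b ≤ 0) or (c ≠ 0 and c² ≥ a b). -/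
/-! For `ε > 0` the lower envelope `f̲_ε(y)` is at most `f(-c y / a, y) = (a b - c²) y² / (2 a)`
when `a > 0`, and at most the smaller endpoint value `a ε² / 2 - |c| ε |y| + b y² / 2` when
`a ≤ 0`; near `y = 0` the linear term `-|c| ε |y|` beats `b y² / 2` exactly when `c ≠ 0` or
`b ≤ 0`. Comparing with `f̲_ε(0)` shows that `0` maximizes `f̲_ε` locally iff
`(c ≠ 0 ∨ b ≤ 0) ∧ (0 < a → a b ≤ c²)`, and the necessity of this condition holds for every
`ε ≥ 0`. The upper envelope of `f` is minus the lower envelope of `(u, v) ↦ -f(v, u)`, the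
quadratic with parameters `(-b, -a, -c)`, and the two conditions together are the stated one. -/

open Filter

/-- One-dimensional local upper envelope `f̄_{ε,y*}(x) = max_{|y−y*|≤ε} f(x,y)`. -/
noncomputable def envU1 (f : ℝ → ℝ → ℝ) (ystar ε x : ℝ) : ℝ :=
  sSup ((fun y => f x y) '' Metric.closedBall ystar ε)

/-- One-dimensional local lower envelope `f̲_{ε,x*}(y) = min_{|x−x*|≤ε} f(x,y)`. -/
noncomputable def envL1 (f : ℝ → ℝ → ℝ) (xstar ε y : ℝ) : ℝ :=
  sInf ((fun x => f x y) '' Metric.closedBall xstar ε)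

/-- `(x⋆, y⋆)` is a local robust point of `f : ℝ × ℝ → ℝ`: there are nonnegative
sequences `ε_n → 0` and `ε'_n → 0` such that for every `n`, `y⋆` is a local maximizer
of `f̲_{ε'_n,x⋆}` and `x⋆` is a local minimizer of `f̄_{ε_n,y⋆}`. -/
def IsLocalRobust (f : ℝ → ℝ → ℝ) (xstar ystar : ℝ) : Prop :=
  ∃ εseq ε'seq : ℕ → ℝ,
    (∀ k, 0 ≤ εseq k) ∧ Tendsto εseq atTop (nhds 0) ∧
    (∀ k, 0 ≤ ε'seq k) ∧ Tendsto ε'seq atTop (nhds 0) ∧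
    (∀ k, ∃ δ > (0 : ℝ), ∀ y : ℝ, |y - ystar| ≤ δ →
      envL1 f xstar (ε'seq k) y ≤ envL1 f xstar (ε'seq k) ystar) ∧
    (∀ k, ∃ δ > (0 : ℝ), ∀ x : ℝ, |x - xstar| ≤ δ →
      envU1 f ystar (εseq k) xstar ≤ envU1 f ystar (εseq k) x)

open Topology Metric

noncomputable def quad (a b c x y : ℝ) : ℝ := a * x ^ 2 / 2 + c * x * y + b * y ^ 2 / 2

section Envelopes

variable {f : ℝ → ℝ → ℝ} {x₀ y₀ ε x y m : ℝ}

theorem envL1_le (hf : Continuous fun x => f x y) (hx : x ∈ closedBall x₀ ε) :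
    envL1 f x₀ ε y ≤ f x y :=
  csInf_le ((isCompact_closedBall _ _).image hf).bddBelow ⟨x, hx, rfl⟩

theorem le_envL1 (hε : 0 ≤ ε) (h : ∀ x ∈ closedBall x₀ ε, m ≤ f x y) : m ≤ envL1 f x₀ ε y :=
  le_csInf ((nonempty_closedBall.2 hε).image _) (by rintro _ ⟨x, hx, rfl⟩; exact h x hx)

theorem envU1_eq_neg_envL1 : envU1 f y₀ ε x = -envL1 (fun u v => -f v u) y₀ ε x := by
  rw [envL1, ← Set.image_image Neg.neg (f x), Set.image_neg_eq_neg, Real.sInf_neg, neg_neg,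
    envU1]

theorem isLocalMin_envU1_iff :
    IsLocalMin (envU1 f y₀ ε) x₀ ↔ IsLocalMax (envL1 (fun u v => -f v u) y₀ ε) x₀ := by
  rw [show envU1 f y₀ ε = fun x => -envL1 (fun u v => -f v u) y₀ ε x from
    funext fun _ => envU1_eq_neg_envL1]
  exact ⟨fun h => by simpa using h.neg, IsLocalMax.neg⟩

end Envelopes

theorem eventually_nhds_iff_abs_sub_le {p : ℝ → Prop} {a : ℝ} :
    (∀ᶠ y in 𝓝 a, p y) ↔ ∃ δ > 0, ∀ y, |y - a| ≤ δ → p y := by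
  simp only [nhds_basis_closedBall.eventually_iff, mem_closedBall, Real.dist_eq]

theorem isLocalRobust_iff {f : ℝ → ℝ → ℝ} {x₀ y₀ : ℝ} :
    IsLocalRobust f x₀ y₀ ↔ ∃ ε ε' : ℕ → ℝ,
      (∀ k, 0 ≤ ε k) ∧ Tendsto ε atTop (𝓝 0) ∧ (∀ k, 0 ≤ ε' k) ∧ Tendsto ε' atTop (𝓝 0) ∧
      (∀ k, IsLocalMax (envL1 f x₀ (ε' k)) y₀) ∧ ∀ k, IsLocalMin (envU1 f y₀ (ε k)) x₀ := by
  simp only [IsLocalRobust, IsLocalMax, IsLocalMin, IsMaxFilter, IsMinFilter,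
    eventually_nhds_iff_abs_sub_le]

theorem nonpos_of_eventually_mul_sq_nonpos {k : ℝ} (h : ∀ᶠ y in 𝓝 (0 : ℝ), k * y ^ 2 ≤ 0) :
    k ≤ 0 := by
  obtain ⟨y, hy, hy0 : y ≠ 0⟩ := ((h.filter_mono nhdsWithin_le_nhds).and
    (self_mem_nhdsWithin : {y : ℝ | y ≠ 0} ∈ 𝓝[≠] 0)).exists
  exact nonpos_of_mul_nonpos_left hy (by positivity)

theorem eventually_mul_sq_le_abs_mul {b k : ℝ} (h : k ≠ 0 ∨ b ≤ 0) :
    ∀ᶠ y in 𝓝 (0 : ℝ), b * y ^ 2 ≤ |k * y| := by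
  rcases h with hk | hb
  · have hsmall : ∀ᶠ y in 𝓝 (0 : ℝ), |b| * |y| ≤ |k| := by
      have : Tendsto (fun y : ℝ => |b| * |y|) (𝓝 0) (𝓝 0) := by
        simpa using (by fun_prop : Continuous fun y : ℝ => |b| * |y|).tendsto 0
      exact this.eventually (eventually_le_nhds (abs_pos.2 hk))
    filter_upwards [hsmall] with y hy
    calc b * y ^ 2 ≤ |b| * |y| * |y| := by
          rw [mul_assoc, ← sq, sq_abs]
          exact mul_le_mul_of_nonneg_right (le_abs_self b) (sq_nonneg y)
      _ ≤ |k| * |y| := mul_le_mul_of_nonneg_right hy (abs_nonneg y)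
      _ = |k * y| := (abs_mul k y).symm
  · exact Eventually.of_forall fun y =>
      (mul_nonpos_of_nonpos_of_nonneg hb (sq_nonneg y)).trans (abs_nonneg _)

theorem continuous_quad_left (a b c y : ℝ) : Continuous fun x => quad a b c x y := by
  unfold quad; fun_prop

section Quadratic

variable {a b c e : ℝ}

theorem quad_eq_sq_add (ha : a ≠ 0) (x y : ℝ) :
    quad a b c x y = (a * x + c * y) ^ 2 / (2 * a) + (a * b - c ^ 2) / (2 * a) * y ^ 2 := by
  unfold quad; field_simp; ring

theorem neg_quad_swap : (fun u v => -quad a b c v u) = quad (-b) (-a) (-c) := by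
  ext u v; unfold quad; ring

theorem quad_cond_of_isLocalMax_envL1 (he : 0 ≤ e) (h : IsLocalMax (envL1 (quad a b c) 0 e) 0) :
    (c ≠ 0 ∨ b ≤ 0) ∧ (0 < a → a * b ≤ c ^ 2) := by
  refine ⟨or_iff_not_imp_left.2 fun hc => ?_, fun ha => ?_⟩
  · obtain rfl : c = 0 := not_not.1 hc
    -- without the cross term, moving `y` shifts every value of `x ↦ f x y` by `b y² / 2`
    have : b / 2 ≤ 0 := nonpos_of_eventually_mul_sq_nonpos (h.mono fun y hy => by
      have : envL1 (quad a b 0) 0 e 0 + b / 2 * y ^ 2 ≤ envL1 (quad a b 0) 0 e y :=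
        le_envL1 he fun x hx => by
          have := envL1_le (continuous_quad_left a b 0 0) hx
          simp only [quad] at this ⊢; linarith
      linarith)
    linarith
  · have hk : (a * b - c ^ 2) / (2 * a) ≤ 0 := by
      refine nonpos_of_eventually_mul_sq_nonpos (h.mono fun y hy => ?_)
      have hlow : (a * b - c ^ 2) / (2 * a) * y ^ 2 ≤ envL1 (quad a b c) 0 e y :=
        le_envL1 he fun x _ => by
          rw [quad_eq_sq_add ha.ne']
          exact le_add_of_nonneg_left (div_nonneg (sq_nonneg _) (by linarith))
      have hzero : envL1 (quad a b c) 0 e 0 ≤ 0 := by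
        simpa [quad] using
          envL1_le (continuous_quad_left a b c 0) (mem_closedBall_self (x := (0 : ℝ)) he)
      linarith
    have := (div_le_iff₀ (by positivity : (0 : ℝ) < 2 * a)).1 hk
    linarith

theorem isLocalMax_envL1_quad_of_pos (he : 0 < e) (ha : 0 < a) (hab : a * b ≤ c ^ 2) :
    IsLocalMax (envL1 (quad a b c) 0 e) 0 := by
  have hmem : ∀ᶠ y in 𝓝 (0 : ℝ), -c * y / a ∈ closedBall (0 : ℝ) e := by
    have : Tendsto (fun y : ℝ => -c * y / a) (𝓝 0) (𝓝 0) := by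
      simpa using (by fun_prop : Continuous fun y : ℝ => -c * y / a).tendsto 0
    exact this (closedBall_mem_nhds 0 he)
  filter_upwards [hmem] with y hy
  calc envL1 (quad a b c) 0 e y ≤ quad a b c (-c * y / a) y :=
        envL1_le (continuous_quad_left a b c y) hy
    _ = (a * b - c ^ 2) / (2 * a) * y ^ 2 := by
      rw [quad_eq_sq_add ha.ne', mul_div_cancel₀ _ ha.ne']; ring
    _ ≤ 0 := mul_nonpos_of_nonpos_of_nonneg
      (div_nonpos_of_nonpos_of_nonneg (by linarith) (by linarith)) (sq_nonneg y)
    _ ≤ envL1 (quad a b c) 0 e 0 := le_envL1 he.le fun x _ => by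
      simp only [quad, mul_zero, ne_eq, OfNat.ofNat_ne_zero, not_false_eq_true, zero_pow, add_zero]
      positivity

theorem isLocalMax_envL1_quad_of_nonpos (he : 0 < e) (ha : a ≤ 0) (hcb : c ≠ 0 ∨ b ≤ 0) :
    IsLocalMax (envL1 (quad a b c) 0 e) 0 := by
  have hzero : a * e ^ 2 / 2 ≤ envL1 (quad a b c) 0 e 0 := le_envL1 he.le fun x hx => by
    have hxe := abs_le.1 (mem_closedBall_zero_iff.1 hx)
    have : x ^ 2 ≤ e ^ 2 := sq_le_sq' hxe.1 hxe.2
    simp only [quad]; nlinarith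
  have hcross := eventually_mul_sq_le_abs_mul (k := 2 * c * e)
    (hcb.imp_left fun hc => mul_ne_zero (mul_ne_zero two_ne_zero hc) he.ne')
  filter_upwards [hcross] with y hy
  have hplus : envL1 (quad a b c) 0 e y ≤ quad a b c e y :=
    envL1_le (continuous_quad_left a b c y) (by simp [abs_of_pos he])
  have hminus : envL1 (quad a b c) 0 e y ≤ quad a b c (-e) y :=
    envL1_le (continuous_quad_left a b c y) (by simp [abs_of_pos he])
  simp only [quad] at hplus hminus
  rcases abs_cases (2 * c * e * y) with ⟨habs, -⟩ | ⟨habs, -⟩ <;> nlinarith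

theorem isLocalMax_envL1_quad (he : 0 < e) (h : (c ≠ 0 ∨ b ≤ 0) ∧ (0 < a → a * b ≤ c ^ 2)) :
    IsLocalMax (envL1 (quad a b c) 0 e) 0 := by
  rcases lt_or_ge 0 a with ha | ha
  · exact isLocalMax_envL1_quad_of_pos he ha (h.2 ha)
  · exact isLocalMax_envL1_quad_of_nonpos he ha h.1

theorem isLocalMin_envU1_quad_iff :
    IsLocalMin (envU1 (quad a b c) 0 e) 0 ↔ IsLocalMax (envL1 (quad (-b) (-a) (-c)) 0 e) 0 := by
  rw [isLocalMin_envU1_iff, neg_quad_swap]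

end Quadratic

theorem quad_robust_cond_iff (a b c : ℝ) :
    ((c = 0 ∧ 0 ≤ a ∧ b ≤ 0) ∨ (c ≠ 0 ∧ a * b ≤ c ^ 2)) ↔
      ((c ≠ 0 ∨ b ≤ 0) ∧ (0 < a → a * b ≤ c ^ 2)) ∧
        ((-c ≠ 0 ∨ -a ≤ 0) ∧ (0 < -b → -b * -a ≤ (-c) ^ 2)) := by
  simp only [neg_ne_zero, neg_nonpos, neg_pos, neg_mul_neg, even_two, Even.neg_pow, mul_comm b a]
  rcases eq_or_ne c 0 with rfl | hc
  · simp only [true_and, ne_eq, not_true_eq_false, false_and, or_false, false_or]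
    constructor
    · rintro ⟨ha, hb⟩
      exact ⟨⟨hb, fun _ => by nlinarith⟩, ha, fun _ => by nlinarith⟩
    · rintro ⟨⟨hb, -⟩, ha, -⟩
      exact ⟨ha, hb⟩
  · simp only [hc, ne_eq, not_false_eq_true, true_or, true_and, false_and, false_or]
    refine ⟨fun h => ⟨fun _ => h, fun _ => h⟩, fun ⟨hpos, hneg⟩ => ?_⟩
    by_contra! hab
    -- `a b > c ^ 2 ≥ 0` forces `a` and `b` to have the same strict sign
    rcases lt_trichotomy a 0 with ha | rfl | ha
    · exact hab.not_ge (hneg (by nlinarith [sq_nonneg c]))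
    · nlinarith [sq_nonneg c]
    · exact hab.not_ge (hpos ha)

/-- For `f(x,y) = a x²/2 + c x y + b y²/2` on `ℝ × ℝ`, the origin is a local robust
point iff either (`c = 0`, `a ≥ 0` and `b ≤ 0`) or (`c ≠ 0` and `c² ≥ a b`). -/
theorem quadratic_1d_isLocalRobust_iff (a b c : ℝ) :
    IsLocalRobust (fun x y => a * x ^ 2 / 2 + c * x * y + b * y ^ 2 / 2) 0 0 ↔
      ((c = 0 ∧ 0 ≤ a ∧ b ≤ 0) ∨ (c ≠ 0 ∧ a * b ≤ c ^ 2)) := by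
  rw [isLocalRobust_iff, quad_robust_cond_iff]
  constructor
  · rintro ⟨ε, ε', hε, -, hε', -, hmax, hmin⟩
    exact ⟨quad_cond_of_isLocalMax_envL1 (hε' 0) (hmax 0),
      quad_cond_of_isLocalMax_envL1 (hε 0) (isLocalMin_envU1_quad_iff.1 (hmin 0))⟩
  · rintro ⟨hlow, hup⟩
    have hpos (k : ℕ) : (0 : ℝ) < 1 / ((k : ℝ) + 1) := by positivity
    exact ⟨_, _, fun k => (hpos k).le, tendsto_one_div_add_atTop_nhds_zero_nat,
      fun k => (hpos k).le, tendsto_one_div_add_atTop_nhds_zero_nat,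
      fun k => isLocalMax_envL1_quad (hpos k) hlow,
      fun k => isLocalMin_envU1_quad_iff.2 (isLocalMax_envL1_quad (hpos k) hup)⟩
end

section
/- Let d be a natural number, v : ℝ^d → ℝ^d a map, and β a nonzero real number. Suppose z, w : ℕ → ℝ^d satisfy, for all t ∈ ℕ, z(t+1) = z(t) + (1/β)·v(w(t)) and w(t+1) = z(t+1) + v(w(t)). Then for all t ∈ ℕ, w(t+2) = w(t+1) + (1 + 1/β)·v(w(t+1)) − v(w(t)); that is, the past extra-gradient iterates w satisfy the generalized optimistic gradient descent recursion with parameter k = 1 + 1/β. -/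
theorem pastExtraGradient_add_two {R M : Type*} [Ring R] [AddCommGroup M] [Module R M]
    (v : M → M) (c : R) (z w : ℕ → M)
    (hz : ∀ t, z (t + 1) = z t + c • v (w t))
    (hw : ∀ t, w (t + 1) = z (t + 1) + v (w t)) (t : ℕ) :
    w (t + 2) = w (t + 1) + (1 + c) • v (w (t + 1)) - v (w t) := by
  have hz_eq : z (t + 1) = w (t + 1) - v (w t) := by rw [hw t]; abel
  calc w (t + 2) = z (t + 1) + c • v (w (t + 1)) + v (w (t + 1)) := by rw [hw (t + 1), hz (t + 1)]
    _ = w (t + 1) + (1 + c) • v (w (t + 1)) - v (w t) := by rw [hz_eq, add_smul, one_smul]; abel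

theorem pastExtraGradient_eq_ogd_general {d : ℕ}
    (v : EuclideanSpace ℝ (Fin d) → EuclideanSpace ℝ (Fin d))
    (β : ℝ)
    (z w : ℕ → EuclideanSpace ℝ (Fin d))
    (hz : ∀ t : ℕ, z (t + 1) = z t + (1 / β) • v (w t))
    (hw : ∀ t : ℕ, w (t + 1) = z (t + 1) + v (w t)) :
    ∀ t : ℕ, w (t + 2) = w (t + 1) + (1 + 1 / β) • v (w (t + 1)) - v (w t) :=
  pastExtraGradient_add_two v (1 / β) z w hz hw

/-- The past extra-gradient iterates satisfy the generalized optimistic gradient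
descent recursion with parameter `k = 1 + 1/β`. -/
theorem pastExtraGradient_eq_ogd {d : ℕ}
    (v : EuclideanSpace ℝ (Fin d) → EuclideanSpace ℝ (Fin d))
    (β : ℝ) (hβ : β ≠ 0)
    (z w : ℕ → EuclideanSpace ℝ (Fin d))
    (hz : ∀ t : ℕ, z (t + 1) = z t + (1 / β) • v (w t))
    (hw : ∀ t : ℕ, w (t + 1) = z (t + 1) + v (w t)) :
    ∀ t : ℕ, w (t + 2) = w (t + 1) + (1 + 1 / β) • v (w (t + 1)) - v (w t) :=
  pastExtraGradient_eq_ogd_general v β z w hz hw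
end

section
/- Let a, b ∈ ℂ. Every complex root λ of the polynomial λ² + a·λ + b satisfies |λ| < 1 if and only if |b| < 1 and (1 − |b|²)² + 2·Re(a²·conj(b)) > |a|²·(1 + |b|²). -/
/-!
Over `ℂ` the polynomial factors as `(λ - x)(λ - y)` with `a = -(x + y)` and `b = xy`. In these
coordinates the Schur expression `(1 - |b|²)² + 2 Re(a² conj b) - |a|²(1 + |b|²)` equals
`(1 - |x|²)(1 - |y|²)|1 - x conj y|²`, whose last factor is nonzero once both roots are in the
disk. Conversely, positivity of the product together with `|xy| < 1` rules out `|x|, |y| ≥ 1`.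
-/

open Complex ComplexConjugate

theorem exists_add_mul_eq_of_isAlgClosed {K : Type*} [Field K] [IsAlgClosed K] [NeZero (2 : K)]
    (a b : K) : ∃ x y : K, a = -(x + y) ∧ b = x * y := by
  obtain ⟨s, hs⟩ := IsAlgClosed.exists_eq_mul_self (a ^ 2 - 4 * b)
  refine ⟨(-a + s) / 2, (-a - s) / 2, by field_simp; ring, ?_⟩
  field_simp
  linear_combination -hs

theorem sq_add_mul_add_eq_zero_iff {R : Type*} [CommRing R] [NoZeroDivisors R] (x y t : R) :
    t ^ 2 + -(x + y) * t + x * y = 0 ↔ t = x ∨ t = y := by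
  rw [show t ^ 2 + -(x + y) * t + x * y = (t - x) * (t - y) by ring, mul_eq_zero, sub_eq_zero,
    sub_eq_zero]

theorem schur_expr_eq (x y : ℂ) :
    (1 - ‖x * y‖ ^ 2) ^ 2 + 2 * ((x + y) ^ 2 * conj (x * y)).re
        - ‖x + y‖ ^ 2 * (1 + ‖x * y‖ ^ 2)
      = (1 - ‖x‖ ^ 2) * (1 - ‖y‖ ^ 2) * ‖1 - x * conj y‖ ^ 2 := by
  simp only [Complex.sq_norm]
  simp only [normSq_apply, pow_two, mul_re, mul_im, add_re, add_im, sub_re, sub_im,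
    one_re, one_im, conj_re, conj_im]
  ring

theorem one_sub_mul_conj_ne_zero {x y : ℂ} (hx : ‖x‖ < 1) (hy : ‖y‖ < 1) :
    1 - x * conj y ≠ 0 := by
  rw [sub_ne_zero]
  refine fun h => (?_ : ‖x * conj y‖ < 1).ne (by rw [← h, norm_one])
  rw [norm_mul, norm_conj]
  exact mul_lt_one_of_nonneg_of_lt_one_left (norm_nonneg x) hx hy.le

theorem lt_one_of_one_sub_sq_mul_pos {u v : ℝ} (hv : 0 ≤ v) (huv : u * v < 1)
    (h : 0 < (1 - u ^ 2) * (1 - v ^ 2)) : u < 1 := by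
  by_contra! hu
  have hv1 : 1 < v := by
    have : 1 - v ^ 2 < 0 := neg_of_mul_pos_right h (by nlinarith)
    nlinarith
  nlinarith

theorem norm_lt_one_and_norm_lt_one_iff_schur (x y : ℂ) :
    ‖x‖ < 1 ∧ ‖y‖ < 1 ↔
      ‖x * y‖ < 1 ∧
        (1 - ‖x * y‖ ^ 2) ^ 2 + 2 * ((x + y) ^ 2 * conj (x * y)).re
          > ‖x + y‖ ^ 2 * (1 + ‖x * y‖ ^ 2) := by
  rw [gt_iff_lt, ← sub_pos (b := ‖x + y‖ ^ 2 * _), schur_expr_eq, norm_mul]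
  constructor
  · rintro ⟨hx, hy⟩
    have hx2 : 0 < 1 - ‖x‖ ^ 2 := by nlinarith [norm_nonneg x]
    have hy2 : 0 < 1 - ‖y‖ ^ 2 := by nlinarith [norm_nonneg y]
    exact ⟨mul_lt_one_of_nonneg_of_lt_one_left (norm_nonneg x) hx hy.le,
      mul_pos (mul_pos hx2 hy2) (pow_pos (norm_pos_iff.2 (one_sub_mul_conj_ne_zero hx hy)) 2)⟩
  · rintro ⟨hxy, hpos⟩
    have h := pos_of_mul_pos_left hpos (sq_nonneg _)
    exact ⟨lt_one_of_one_sub_sq_mul_pos (norm_nonneg y) hxy h,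
      lt_one_of_one_sub_sq_mul_pos (norm_nonneg x) (by rwa [mul_comm]) (by rwa [mul_comm])⟩

/-- Schur's criterion for complex quadratic polynomials: all roots of
`λ² + aλ + b` lie in the open unit disk iff `|b| < 1` and
`(1 − |b|²)² + 2 Re(a² conj(b)) > |a|² (1 + |b|²)`. -/
theorem schur_quadratic_roots_in_unit_disk (a b : ℂ) :
    (∀ lam : ℂ, lam ^ 2 + a * lam + b = 0 → ‖lam‖ < 1) ↔
      (‖b‖ < 1 ∧
        (1 - ‖b‖ ^ 2) ^ 2 + 2 * (a ^ 2 * (starRingEnd ℂ) b).re >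
          ‖a‖ ^ 2 * (1 + ‖b‖ ^ 2)) := by
  obtain ⟨x, y, rfl, rfl⟩ := exists_add_mul_eq_of_isAlgClosed a b
  simp only [sq_add_mul_add_eq_zero_iff, forall_eq_or_imp, forall_eq, neg_sq, norm_neg]
  exact norm_lt_one_and_norm_lt_one_iff_schur x y
end

section
/- Let k > 1 be a real number and λ ∈ ℂ. Every complex root x of the polynomial x² − (1 + k·λ)·x + λ satisfies |x| < 1 if and only if |λ| < 1 and |λ|²·(k − 3 + (k + 1)·|λ|²) < 2·Re(λ)·(k·|λ|² − 1). -/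
/-!
Factor `x² − (1 + kλ)x + λ = (x − r)(x − s)`. The Schur–Cohn identity
`(1 − |rs|²)² − |conj(r + s) − conj(rs)(r + s)|²`
`  = (1 − |r|²)(1 − |s|²)(|r − s|² + (1 − |r|²)(1 − |s|²))`,
whose last factor is at least `(1 − |r||s|)²`, shows that both roots lie in the unit disk iff
`|rs| < 1` and `|conj(r + s) − conj(rs)(r + s)| < 1 − |rs|²`. For `r + s = 1 + kλ`, `rs = λ` the
difference of the squares of the two sides of the second condition is `k − 1` times the difference
of the two sides of the stated inequality.
-/

open Complex ComplexConjugate Polynomial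

theorem IsAlgClosed.exists_add_eq_and_mul_eq {K : Type*} [Field K] [IsAlgClosed K] (b c : K) :
    ∃ r s : K, r + s = b ∧ r * s = c := by
  obtain ⟨r, hr⟩ := IsAlgClosed.exists_root (C 1 * X ^ 2 + C (-b) * X + C c)
    (by rw [degree_quadratic one_ne_zero]; decide)
  refine ⟨r, b - r, by ring, ?_⟩
  simp only [IsRoot, eval_add, eval_mul, eval_C, eval_pow, eval_X] at hr
  linear_combination -hr

theorem forall_roots_quadratic_iff {R : Type*} [CommRing R] [NoZeroDivisors R] (r s : R)
    (P : R → Prop) :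
    (∀ x : R, x ^ 2 - (r + s) * x + r * s = 0 → P x) ↔ P r ∧ P s := by
  have hroots (x : R) : x ^ 2 - (r + s) * x + r * s = 0 ↔ x = r ∨ x = s := by
    rw [show x ^ 2 - (r + s) * x + r * s = (x - r) * (x - s) by ring, mul_eq_zero,
      sub_eq_zero, sub_eq_zero]
  simp only [hroots, or_imp, forall_and, forall_eq]

theorem lt_one_and_lt_one_iff {p q : ℝ} (hp : 0 ≤ p) (hq : 0 ≤ q) :
    p < 1 ∧ q < 1 ↔ p * q < 1 ∧ 0 < (1 - p ^ 2) * (1 - q ^ 2) := by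
  constructor
  · rintro ⟨hp1, hq1⟩
    exact ⟨by nlinarith, mul_pos (by nlinarith) (by nlinarith)⟩
  · rintro ⟨hpq, hpos⟩
    rcases mul_pos_iff.mp hpos with ⟨hp1, hq1⟩ | ⟨hp1, hq1⟩
    · exact ⟨by nlinarith, by nlinarith⟩
    · nlinarith [one_lt_sq_iff₀ hp |>.mp (by linarith), one_lt_sq_iff₀ hq |>.mp (by linarith)]

theorem Complex.schurCohn_identity (r s : ℂ) :
    (1 - ‖r * s‖ ^ 2) ^ 2 - ‖conj (r + s) - conj (r * s) * (r + s)‖ ^ 2 =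
      (1 - ‖r‖ ^ 2) * (1 - ‖s‖ ^ 2) * (‖r - s‖ ^ 2 + (1 - ‖r‖ ^ 2) * (1 - ‖s‖ ^ 2)) := by
  simp only [Complex.sq_norm, normSq_apply, mul_re, mul_im, add_re, add_im, sub_re, sub_im,
    conj_re, conj_im]
  ring

theorem sq_one_sub_norm_mul_norm_le {E : Type*} [SeminormedAddCommGroup E] (r s : E) :
    (1 - ‖r‖ * ‖s‖) ^ 2 ≤ ‖r - s‖ ^ 2 + (1 - ‖r‖ ^ 2) * (1 - ‖s‖ ^ 2) := by
  have h := pow_le_pow_left₀ (abs_nonneg _) (abs_norm_sub_norm_le r s) 2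
  rw [sq_abs] at h
  linear_combination h

theorem Complex.norm_lt_one_and_norm_lt_one_iff (r s : ℂ) :
    ‖r‖ < 1 ∧ ‖s‖ < 1 ↔
      ‖r * s‖ < 1 ∧ ‖conj (r + s) - conj (r * s) * (r + s)‖ < 1 - ‖r * s‖ ^ 2 := by
  rw [lt_one_and_lt_one_iff (norm_nonneg r) (norm_nonneg s), ← norm_mul]
  refine and_congr_right fun hrs => ?_
  have hE : 0 < ‖r - s‖ ^ 2 + (1 - ‖r‖ ^ 2) * (1 - ‖s‖ ^ 2) :=
    (sq_pos_of_pos (sub_pos.mpr (norm_mul r s ▸ hrs))).trans_le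
      (sq_one_sub_norm_mul_norm_le r s)
  have hrs' : 0 ≤ 1 - ‖r * s‖ ^ 2 := sub_nonneg.mpr (pow_le_one₀ (norm_nonneg _) hrs.le)
  rw [← mul_pos_iff_of_pos_right hE, ← schurCohn_identity, sub_pos,
    pow_lt_pow_iff_left₀ (norm_nonneg _) hrs' two_ne_zero]

theorem ogd_schurCohn_gap (k : ℝ) (lam : ℂ) :
    (1 - ‖lam‖ ^ 2) ^ 2 - ‖conj (1 + (k : ℂ) * lam) - conj lam * (1 + (k : ℂ) * lam)‖ ^ 2 =
      (k - 1) * (2 * lam.re * (k * ‖lam‖ ^ 2 - 1) -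
        ‖lam‖ ^ 2 * (k - 3 + (k + 1) * ‖lam‖ ^ 2)) := by
  simp only [Complex.sq_norm, normSq_apply, mul_re, mul_im, add_re, add_im, sub_re, sub_im,
    conj_re, conj_im, one_re, one_im, ofReal_re, ofReal_im]
  ring

/-- Stability criterion for generalized optimistic gradient descent: all roots of
`x² − (1 + kλ)x + λ` lie in the open unit disk iff `|λ| < 1` and
`|λ|² (k − 3 + (k+1)|λ|²) < 2 Re(λ) (k|λ|² − 1)`. -/
theorem ogd_characteristic_roots_in_unit_disk (k : ℝ) (hk : 1 < k) (lam : ℂ) :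
    (∀ x : ℂ, x ^ 2 - (1 + (k : ℂ) * lam) * x + lam = 0 → ‖x‖ < 1) ↔
      (‖lam‖ < 1 ∧
        ‖lam‖ ^ 2 * (k - 3 + (k + 1) * ‖lam‖ ^ 2) <
          2 * lam.re * (k * ‖lam‖ ^ 2 - 1)) := by
  obtain ⟨r, s, hsum, hprod⟩ := IsAlgClosed.exists_add_eq_and_mul_eq (1 + (k : ℂ) * lam) lam
  rw [← hsum, ← hprod, forall_roots_quadratic_iff r s (‖·‖ < 1),
    norm_lt_one_and_norm_lt_one_iff, hsum, hprod]
  refine and_congr_right fun hlam => ?_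
  have hlam' : 0 ≤ 1 - ‖lam‖ ^ 2 := sub_nonneg.mpr (pow_le_one₀ (norm_nonneg _) hlam.le)
  rw [← pow_lt_pow_iff_left₀ (norm_nonneg _) hlam' two_ne_zero, ← sub_pos, ogd_schurCohn_gap,
    mul_pos_iff_of_pos_left (sub_pos.mpr hk), sub_pos]
end

section
/- Let A be a real symmetric positive semidefinite n×n matrix, B a real symmetric negative semidefinite m×m matrix, C any real n×m matrix, and α₁, α₂ > 0 real numbers. Consider the real (n+m)×(n+m) block matrix H with blocks H = [[−α₁·A, −α₁·C],[α₂·Cᵀ, α₂·B]]. Then every complex eigenvalue λ of H satisfies Re(λ) ≤ 0. Moreover, if A = 0 and B = 0 (the bilinear case), then every complex eigenvalue λ of H satisfies Re(λ) = 0. -/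
/-!
Write `H = K * M` with `K = diag(α₁ I, α₂ I)` positive definite and `M = [[-A, -C], [Cᵀ, B]]`,
whose Hermitian part `(M + Mᴴ) / 2 = diag(-A, B)` is negative semidefinite, and which is
skew-Hermitian when `A = 0` and `B = 0`. If `K M u = λ u` with `u ≠ 0`, then
`u* M u = λ · u* K⁻¹ u` with `u* K⁻¹ u > 0`, and `Re (u* M u) = u* ((M + Mᴴ) / 2) u`.
-/

open Matrix

open scoped ComplexOrder

namespace Matrix

variable {ι 𝕜 : Type*} [Fintype ι] [RCLike 𝕜]

theorem re_star_dotProduct_conjTranspose_mulVec (M : Matrix ι ι 𝕜) (u : ι → 𝕜) :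
    RCLike.re (star u ⬝ᵥ Mᴴ *ᵥ u) = RCLike.re (star u ⬝ᵥ M *ᵥ u) := by
  rw [dotProduct_mulVec, ← star_mulVec, star_dotProduct, RCLike.star_def, RCLike.conj_re]

variable [DecidableEq ι]

theorem exists_mulVec_eq_smul_of_mem_spectrum {K : Type*} [Field K] {A : Matrix ι ι K} {μ : K}
    (hμ : μ ∈ spectrum K A) : ∃ v, v ≠ 0 ∧ A *ᵥ v = μ • v := by
  rw [← spectrum_toLin', ← Module.End.hasEigenvalue_iff_mem_spectrum] at hμ
  obtain ⟨v, hv, hv0⟩ := hμ.exists_hasEigenvector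
  exact ⟨v, hv0, Module.End.mem_eigenspace_iff.mp hv⟩

theorem star_dotProduct_mulVec_eq_of_mul_mulVec_eq {R : Type*} [CommRing R] [StarRing R]
    {K M : Matrix ι ι R} (hK : IsUnit K.det) {μ : R} {u : ι → R} (h : (K * M) *ᵥ u = μ • u) :
    star u ⬝ᵥ M *ᵥ u = μ * (star u ⬝ᵥ K⁻¹ *ᵥ u) := by
  have hMu : M *ᵥ u = μ • K⁻¹ *ᵥ u := by
    rw [← mulVec_smul, ← h, mulVec_mulVec, K.nonsing_inv_mul_cancel_left M hK]
  rw [hMu, dotProduct_smul, smul_eq_mul]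

theorem exists_pos_re_mul_eq_of_mem_spectrum_posDef_mul {K M : Matrix ι ι 𝕜} (hK : K.PosDef)
    {μ : 𝕜} (hμ : μ ∈ spectrum 𝕜 (K * M)) :
    ∃ u : ι → 𝕜, ∃ r : ℝ, 0 < r ∧ RCLike.re μ * r = RCLike.re (star u ⬝ᵥ M *ᵥ u) := by
  obtain ⟨u, hu0, hu⟩ := exists_mulVec_eq_smul_of_mem_spectrum hμ
  obtain ⟨r, hr, hr_eq⟩ := RCLike.pos_iff_exists_ofReal.mp (hK.inv.dotProduct_mulVec_pos hu0)
  refine ⟨u, r, hr, ?_⟩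
  rw [star_dotProduct_mulVec_eq_of_mul_mulVec_eq (hK.isUnit.map detMonoidHom) hu, ← hr_eq,
    RCLike.re_mul_ofReal]

theorem re_nonpos_of_mem_spectrum_posDef_mul {K M : Matrix ι ι 𝕜} (hK : K.PosDef)
    (hM : (-(M + Mᴴ)).PosSemidef) {μ : 𝕜} (hμ : μ ∈ spectrum 𝕜 (K * M)) : RCLike.re μ ≤ 0 := by
  obtain ⟨u, r, hr, h⟩ := exists_pos_re_mul_eq_of_mem_spectrum_posDef_mul hK hμ
  have hquad := (RCLike.nonneg_iff.mp (hM.dotProduct_mulVec_nonneg u)).1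
  rw [neg_mulVec, dotProduct_neg, map_neg, add_mulVec, dotProduct_add, map_add,
    re_star_dotProduct_conjTranspose_mulVec, ← h] at hquad
  nlinarith

theorem re_eq_zero_of_mem_spectrum_posDef_mul {K M : Matrix ι ι 𝕜} (hK : K.PosDef)
    (hM : Mᴴ = -M) {μ : 𝕜} (hμ : μ ∈ spectrum 𝕜 (K * M)) : RCLike.re μ = 0 := by
  obtain ⟨u, r, hr, h⟩ := exists_pos_re_mul_eq_of_mem_spectrum_posDef_mul hK hμ
  have hskew := re_star_dotProduct_conjTranspose_mulVec M u
  rw [hM, neg_mulVec, dotProduct_neg, map_neg, ← h] at hskew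
  nlinarith

variable {m n : Type*}

theorem PosSemidef.fromBlocks_zero {R : Type*} [CommRing R] [PartialOrder R] [StarRing R]
    [StarOrderedRing R] [Fintype m] [Fintype n] {A : Matrix m m R} {D : Matrix n n R}
    (hA : A.PosSemidef) (hD : D.PosSemidef) : (fromBlocks A 0 0 D).PosSemidef := by
  refine .of_dotProduct_mulVec_nonneg (hA.1.fromBlocks (by simp) hD.1) fun x ↦ ?_
  rw [← Sum.elim_comp_inl_inr x, fromBlocks_mulVec, Function.star_sumElim,
    sumElim_dotProduct_sumElim]
  simpa using add_nonneg (hA.dotProduct_mulVec_nonneg _) (hD.dotProduct_mulVec_nonneg _)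

theorem PosSemidef.map_ofReal {𝕜 : Type*} [RCLike 𝕜] [Fintype n] {M : Matrix n n ℝ}
    (hM : M.PosSemidef) : (M.map ((↑) : ℝ → 𝕜)).PosSemidef := by
  classical
  obtain ⟨L, rfl⟩ : ∃ L : Matrix n n ℝ, M = Lᴴ * L := by
    open scoped MatrixOrder in
    exact CStarAlgebra.nonneg_iff_eq_star_mul_self.mp hM.nonneg
  have : (Lᴴ * L).map ((↑) : ℝ → 𝕜) = (L.map (↑))ᴴ * L.map (↑) := by
    rw [← conjTranspose_map _ (fun r ↦ (RCLike.conj_ofReal r).symm), ← Matrix.map_mul]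
  rw [this]
  exact posSemidef_conjTranspose_mul_self _

end Matrix

/-- At a local saddle point, the spectrum of the two-time-scale GDA Jacobian
`H = [[−α₁A, −α₁C], [α₂Cᵀ, α₂B]]` (with `A ⪰ 0`, `B ⪯ 0`) lies in the closed left
half-plane; in the bilinear case (`A = 0`, `B = 0`) it lies on the imaginary axis. -/
theorem gda_jacobian_spectrum_left_halfPlane {n m : ℕ}
    (A : Matrix (Fin n) (Fin n) ℝ) (B : Matrix (Fin m) (Fin m) ℝ)
    (C : Matrix (Fin n) (Fin m) ℝ)
    (hA : A.PosSemidef) (hB : Matrix.NegSemidef' B)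
    (α₁ α₂ : ℝ) (hα₁ : 0 < α₁) (hα₂ : 0 < α₂) :
    (∀ lam ∈ spectrum ℂ
        ((Matrix.fromBlocks ((-α₁) • A) ((-α₁) • C) (α₂ • Cᵀ) (α₂ • B)).map
          (Complex.ofReal)),
      lam.re ≤ 0) ∧
    (A = 0 → B = 0 →
      ∀ lam ∈ spectrum ℂ
          ((Matrix.fromBlocks ((-α₁) • A) ((-α₁) • C) (α₂ • Cᵀ) (α₂ • B)).map
            (Complex.ofReal)),
        lam.re = 0) := by
  set K : Matrix (Fin n ⊕ Fin m) (Fin n ⊕ Fin m) ℂ :=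
    diagonal (Sum.elim (fun _ ↦ (α₁ : ℂ)) fun _ ↦ (α₂ : ℂ))
  set M : Matrix (Fin n ⊕ Fin m) (Fin n ⊕ Fin m) ℂ := (fromBlocks (-A) (-C) Cᵀ B).map (↑)
  have hH :
      (fromBlocks ((-α₁) • A) ((-α₁) • C) (α₂ • Cᵀ) (α₂ • B)).map Complex.ofReal = K * M := by
    ext (i | i) (j | j) <;> simp [K, M]
  have hK : K.PosDef := posDef_diagonal_iff.mpr (by simp [hα₁, hα₂])
  rw [hH]
  refine ⟨fun μ hμ ↦ ?_, fun hA0 hB0 μ hμ ↦ ?_⟩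
  · have hHerm : -(M + Mᴴ) = (fromBlocks (A + Aᵀ) 0 0 (-B + (-B)ᵀ)).map (↑) := by
      ext (i | i) (j | j) <;> simp [M] <;> ring
    have hHerm_psd : (-(M + Mᴴ)).PosSemidef := by
      rw [hHerm]
      exact ((hA.add hA.transpose).fromBlocks_zero
        (PosSemidef.add hB (PosSemidef.transpose hB))).map_ofReal
    exact re_nonpos_of_mem_spectrum_posDef_mul hK hHerm_psd hμ
  · have hskew : Mᴴ = -M := by
      ext (i | i) (j | j) <;> simp [M, hA0, hB0]
    exact re_eq_zero_of_mem_spectrum_posDef_mul hK hskew hμ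
end
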